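/- arXiv:2512.09084 — 2 statements merged into one kernel-verified Lean document; each statement's English description precedes it below -/
import Mathlib

section
/- For any continuous function f: [0,1]^n → ℝ, there exist continuous univariate functions Φ_q : ℝ → ℝ (for q = 0,...,2n) and continuous univariate functions φ_{q,p} : [0,1] → ℝ (for q = 0,...,2n and p = 1,...,n) such that f(x_1,...,x_n) = Σ_{q=0}^{2n} Φ_q( Σ_{p=1}^{n} φ_{q,p}(x_p) ) for all (x_1,...,x_n) ∈ [0,1]^n. -/
/-!
The inner functions do not depend on `f`. Shift a grid of blocks of length `(N - 1)δ` separated by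
gaps of length `δ` by `qδ`, for `q < N = 2n + 1`: a real number misses the blocks of at most one
`q`, so every `x ∈ [0, 1]^n` lies in a cube of the grid for at least `n + 1` values of `q`. By
Baire's theorem in `C(I, ℝ)^(N × n)`, a generic family `φ` has, for arbitrarily small `δ`, inner
sums `s q x = ∑ p, φ q p (x p)` mapping these cubes to clusters of diameter `a` that are `3a` apart: near
any family there is one that is constant on each block and takes distinct values on distinct
cubes, by a perturbation avoiding finitely many bad values.

Given `g`, a plateau of height `g(cube) / (n + 1)` over each cluster gives outer functions `Ψ q`
bounded by `‖g‖ / (n + 1)` with `‖g - ∑ q, Ψ q ∘ s q‖ ≤ (1 - 1 / (2n + 2)) ‖g‖`, since at least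
`n + 1` of the terms approximate `g / (n + 1)` and the at most `n` others are small. Iterating on
the residual, the outer functions are sums of geometric series.
-/

open Set Finset Filter Topology

namespace KolmogorovArnold

noncomputable section

def ramp (y : ℝ) : ℝ := max 0 (min 1 y)

@[fun_prop]
lemma continuous_ramp : Continuous ramp := by unfold ramp; fun_prop

lemma ramp_nonneg (y : ℝ) : 0 ≤ ramp y := le_max_left _ _

lemma ramp_le_one (y : ℝ) : ramp y ≤ 1 := max_le zero_le_one (min_le_left _ _)

lemma ramp_of_nonpos {y : ℝ} (h : y ≤ 0) : ramp y = 0 :=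
  max_eq_left ((min_le_right _ _).trans h)

lemma ramp_of_one_le {y : ℝ} (h : 1 ≤ y) : ramp y = 1 := by
  rw [ramp, min_eq_left h, max_eq_right zero_le_one]

def plateau (c a y : ℝ) : ℝ := ramp (3 - 2 * |y - c| / a)

@[fun_prop]
lemma continuous_plateau (c a : ℝ) : Continuous (plateau c a) := by
  unfold plateau; fun_prop

lemma plateau_nonneg (c a y : ℝ) : 0 ≤ plateau c a y := ramp_nonneg _

lemma plateau_le_one (c a y : ℝ) : plateau c a y ≤ 1 := ramp_le_one _

lemma plateau_eq_one {c a y : ℝ} (ha : 0 < a) (h : |y - c| ≤ a) : plateau c a y = 1 := by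
  refine ramp_of_one_le ?_
  rw [le_sub_comm, div_le_iff₀ ha]
  linarith

lemma plateau_eq_zero {c a y : ℝ} (ha : 0 < a) (h : 3 * a ≤ 2 * |y - c|) : plateau c a y = 0 := by
  refine ramp_of_nonpos ?_
  rw [sub_nonpos, le_div_iff₀ ha]
  linarith

lemma plateau_eq_zero_of_ne_zero {c c' a y : ℝ} (ha : 0 < a) (hc : 3 * a ≤ |c - c'|)
    (h : plateau c a y ≠ 0) : plateau c' a y = 0 := by
  refine plateau_eq_zero ha ?_
  have : 2 * |y - c| < 3 * a := by
    by_contra! h'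
    exact h (plateau_eq_zero ha h')
  have := abs_sub_le c y c'
  rw [abs_sub_comm c y] at this
  linarith

/-- `Ψ` is a sum of plateaus centred at the images of representatives of the cells, weighted by the
values of `f` there; the clusters being `3a` apart, at most one plateau is nonzero at any point. -/
lemma exists_continuous_comp_approx {X ι : Type*} {U : Set X} {τ : X → ι} {s f : X → ℝ}
    {a ε M : ℝ} (ha : 0 < a) (hM : 0 ≤ M) (hτ : (τ '' U).Finite) (hfM : ∀ x ∈ U, |f x| ≤ M)
    (hnear : ∀ x ∈ U, ∀ y ∈ U, τ x = τ y → |s x - s y| ≤ a ∧ |f x - f y| ≤ ε)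
    (hfar : ∀ x ∈ U, ∀ y ∈ U, τ x ≠ τ y → 3 * a ≤ |s x - s y|) :
    ∃ Ψ : C(ℝ, ℝ), (∀ y, |Ψ y| ≤ M) ∧ ∀ x ∈ U, |Ψ (s x) - f x| ≤ ε := by
  classical
  rcases isEmpty_or_nonempty X with hX | hX
  · exact ⟨0, by simpa using hM, fun x => isEmptyElim x⟩
  set T := hτ.toFinset
  set w := Function.invFunOn τ U
  have hw : ∀ i ∈ T, w i ∈ U ∧ τ (w i) = i := fun i hi =>
    Function.invFunOn_pos (by simpa [T] using hi)
  have hsep : ∀ i ∈ T, ∀ j ∈ T, i ≠ j → 3 * a ≤ |s (w i) - s (w j)| := fun i hi j hj hij =>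
    hfar _ (hw i hi).1 _ (hw j hj).1 (by rwa [(hw i hi).2, (hw j hj).2])
  have hsingle : ∀ y, ∀ i ∈ T, plateau (s (w i)) a y ≠ 0 →
      ∑ j ∈ T, f (w j) * plateau (s (w j)) a y = f (w i) * plateau (s (w i)) a y :=
    fun y i hi hy => Finset.sum_eq_single_of_mem i hi fun j hj hji => by
      rw [plateau_eq_zero_of_ne_zero ha (hsep i hi j hj hji.symm) hy, mul_zero]
  refine ⟨⟨fun y => ∑ i ∈ T, f (w i) * plateau (s (w i)) a y, by fun_prop⟩, fun y => ?_,
    fun x hx => ?_⟩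
  · by_cases h : ∃ i ∈ T, plateau (s (w i)) a y ≠ 0
    · obtain ⟨i, hi, hy⟩ := h
      simp only [ContinuousMap.coe_mk, hsingle y i hi hy, abs_mul]
      rw [abs_of_nonneg (plateau_nonneg _ _ _)]
      simpa using mul_le_mul (hfM _ (hw i hi).1) (plateau_le_one _ _ _) (plateau_nonneg _ _ _) hM
    · push Not at h
      rw [ContinuousMap.coe_mk, Finset.sum_eq_zero fun i hi => by rw [h i hi, mul_zero], abs_zero]
      exact hM
  · have hi : τ x ∈ T := by simpa [T] using ⟨x, hx, rfl⟩
    obtain ⟨hwU, hwτ⟩ := hw _ hi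
    obtain ⟨hs, hf⟩ := hnear x hx _ hwU hwτ.symm
    have hone : plateau (s (w (τ x))) a (s x) = 1 := plateau_eq_one ha hs
    simp only [ContinuousMap.coe_mk, hsingle _ _ hi (by rw [hone]; exact one_ne_zero), hone,
      mul_one]
    rwa [abs_sub_comm]

lemma abs_sub_sum_le {m k : ℕ} (hk : 0 < k) (B : Finset (Fin m)) (hB : k ≤ #B) {v M e : ℝ}
    {w : Fin m → ℝ} (hv : |v| ≤ M) (hw : ∀ q, |w q| ≤ M / k) (hwB : ∀ q ∈ B, |w q - v / k| ≤ e) :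
    |v - ∑ q, w q| ≤ m * e + (m - k) / k * M := by
  have hk' : (0 : ℝ) < k := by exact_mod_cast hk
  obtain ⟨q₀, hq₀⟩ : B.Nonempty := Finset.card_pos.1 (hk.trans_le hB)
  have he : 0 ≤ e := (abs_nonneg _).trans (hwB q₀ hq₀)
  have hcard : (#B : ℝ) + #Bᶜ = m := by
    exact_mod_cast (Finset.card_add_card_compl B).trans (Fintype.card_fin m)
  have hBk : (k : ℝ) ≤ #B := by exact_mod_cast hB
  have hsplit : v - ∑ q, w q = ∑ q ∈ B, (v / k - w q) + (1 - #B / k) * v - ∑ q ∈ Bᶜ, w q := by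
    rw [← Finset.sum_add_sum_compl B w, Finset.sum_sub_distrib, Finset.sum_const, nsmul_eq_mul]
    ring
  have h1 : |∑ q ∈ B, (v / k - w q)| ≤ #B * e := by
    refine (Finset.abs_sum_le_sum_abs _ _).trans ?_
    simpa using Finset.sum_le_sum fun q hq => (abs_sub_comm (v / k) (w q)).trans_le (hwB q hq)
  have h2 : |(1 - #B / k) * v| ≤ (#B / k - 1) * M := by
    rw [abs_mul, abs_of_nonpos (by rw [sub_nonpos, le_div_iff₀ hk']; linarith)]
    refine mul_le_mul (by linarith) hv (abs_nonneg _) ?_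
    rw [sub_nonneg, le_div_iff₀ hk']
    linarith
  have h3 : |∑ q ∈ Bᶜ, w q| ≤ #Bᶜ * (M / k) := by
    refine (Finset.abs_sum_le_sum_abs _ _).trans ?_
    simpa using Finset.sum_le_sum fun q _ => hw q
  have h4 : (#B : ℝ) * e ≤ m * e := mul_le_mul_of_nonneg_right (by linarith) he
  have h5 : (#B / k - 1) * M + #Bᶜ * (M / k) = (m - k) / k * M := by
    rw [← hcard]; field_simp; ring
  rw [hsplit]
  calc _ ≤ |∑ q ∈ B, (v / k - w q)| + |(1 - #B / k) * v| + |∑ q ∈ Bᶜ, w q| :=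
        (abs_sub _ _).trans (by gcongr; exact abs_add_le _ _)
    _ ≤ _ := by linarith

section OuterFunctions

variable {X : Type*} [PseudoMetricSpace X] {m k : ℕ} {s : Fin m → C(X, ℝ)}

open Classical in
def SeparatesAtEveryScale (s : Fin m → C(X, ℝ)) (k : ℕ) : Prop :=
  ∀ d > 0, ∃ (ι : Type) (U : Fin m → Set X) (τ : Fin m → X → ι) (a : ℝ), 0 < a ∧
    (∀ x, k ≤ #{q | x ∈ U q}) ∧
    ∀ q, (τ q '' U q).Finite ∧ ∀ x ∈ U q, ∀ y ∈ U q,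
      (τ q x = τ q y → dist x y ≤ d ∧ |s q x - s q y| ≤ a) ∧
      (τ q x ≠ τ q y → 3 * a ≤ |s q x - s q y|)

lemma one_sub_one_div_two_mul_nonneg {k : ℕ} (hk : 0 < k) : 0 ≤ 1 - 1 / (2 * (k : ℝ)) := by
  rw [sub_nonneg, div_le_one (by positivity)]
  linarith [(Nat.one_le_cast (α := ℝ)).2 hk]

lemma exists_norm_sub_sum_comp_le [CompactSpace X] (hs : SeparatesAtEveryScale s k)
    (hmk : m < 2 * k) (g : C(X, ℝ)) :
    ∃ Ψ : Fin m → C(ℝ, ℝ), (∀ q y, |Ψ q y| ≤ ‖g‖ / k) ∧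
      ‖g - ∑ q, (Ψ q).comp (s q)‖ ≤ (1 - 1 / (2 * k)) * ‖g‖ := by
  classical
  have hk : 0 < k := by omega
  have hk' : (0 : ℝ) < k := by exact_mod_cast hk
  rcases (norm_nonneg g).eq_or_lt with hg | hg
  · refine ⟨0, fun q y => by simp [← hg], ?_⟩
    simp [norm_eq_zero.1 hg.symm]
  set e := ‖g‖ / (2 * k * (m + 1))
  have he : 0 < e := by positivity
  obtain ⟨d, hd, hgd⟩ := Metric.uniformContinuous_iff_le.1
    (CompactSpace.uniformContinuous_of_continuous g.continuous) (k * e) (mul_pos hk' he)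
  obtain ⟨ι, U, τ, a, ha, hcount, hsep⟩ := hs d hd
  have hΨ : ∀ q, ∃ Ψ : C(ℝ, ℝ), (∀ y, |Ψ y| ≤ ‖g‖ / k) ∧
      ∀ x ∈ U q, |Ψ (s q x) - g x / k| ≤ e := by
    refine fun q => exists_continuous_comp_approx ha (div_nonneg (norm_nonneg g) hk'.le) (hsep q).1
      (fun x _ => ?_) (fun x hx y hy hxy => ?_) (fun x hx y hy => ((hsep q).2 x hx y hy).2)
    · rw [abs_div, abs_of_pos hk']
      exact div_le_div_of_nonneg_right (by simpa using g.norm_coe_le_norm x) hk'.le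
    · obtain ⟨hdist, hsq⟩ := ((hsep q).2 x hx y hy).1 hxy
      refine ⟨hsq, ?_⟩
      rw [← sub_div, abs_div, abs_of_pos hk', div_le_iff₀ hk', mul_comm]
      exact hgd hdist
  choose Ψ hΨb hΨa using hΨ
  refine ⟨Ψ, hΨb, (ContinuousMap.norm_le _
    (mul_nonneg (one_sub_one_div_two_mul_nonneg hk) hg.le)).2 fun x => ?_⟩
  have hmk' : (m : ℝ) + 1 ≤ 2 * k := by exact_mod_cast hmk
  have he' : m * e ≤ ‖g‖ / (2 * k) := by
    have : e * (m + 1) = ‖g‖ / (2 * k) := by simp only [e]; field_simp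
    nlinarith
  simp only [ContinuousMap.sub_apply, ContinuousMap.coe_sum, Finset.sum_apply,
    ContinuousMap.comp_apply, Real.norm_eq_abs]
  calc _ ≤ m * e + (m - k) / k * ‖g‖ :=
        abs_sub_sum_le hk _ (hcount x) (g.norm_coe_le_norm x) (fun q => hΨb q (s q x))
          fun q hq => hΨa q x (by simpa using hq)
    _ ≤ ‖g‖ / (2 * k) + (k - 1) / k * ‖g‖ := add_le_add he' <|
        mul_le_mul_of_nonneg_right (div_le_div_of_nonneg_right (by linarith) hk'.le) hg.le
    _ = _ := by field_simp; ring

theorem exists_sum_comp_eq [CompactSpace X] (hs : SeparatesAtEveryScale s k) (hmk : m < 2 * k)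
    (f : C(X, ℝ)) : ∃ Φ : Fin m → C(ℝ, ℝ), ∀ x, f x = ∑ q, Φ q (s q x) := by
  choose Ψ hΨb hΨr using exists_norm_sub_sum_comp_le hs hmk
  set θ : ℝ := 1 - 1 / (2 * k)
  have hk : (0 : ℝ) < k := by exact_mod_cast (show 0 < k by omega)
  have hθ0 : 0 ≤ θ := one_sub_one_div_two_mul_nonneg (by omega)
  have hθ1 : θ < 1 := sub_lt_self _ (by positivity)
  let G : ℕ → C(X, ℝ) := fun j => (fun g => g - ∑ q, (Ψ g q).comp (s q))^[j] f
  have hGsucc : ∀ j, G (j + 1) = G j - ∑ q, (Ψ (G j) q).comp (s q) := fun j =>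
    Function.iterate_succ_apply' _ _ _
  have hG : ∀ j, ‖G j‖ ≤ θ ^ j * ‖f‖ := by
    intro j
    induction j with
    | zero => simp [G]
    | succ j ih =>
      rw [hGsucc, pow_succ', mul_assoc]
      exact (hΨr _).trans (mul_le_mul_of_nonneg_left ih hθ0)
  have hΨG : ∀ q j y, ‖Ψ (G j) q y‖ ≤ ‖f‖ / k * θ ^ j := fun q j y => by
    rw [Real.norm_eq_abs, div_mul_eq_mul_div, mul_comm]
    exact (hΨb _ q y).trans (div_le_div_of_nonneg_right (hG j) hk.le)
  have hsum : Summable fun j => ‖f‖ / k * θ ^ j :=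
    (summable_geometric_of_lt_one hθ0 hθ1).mul_left _
  refine ⟨fun q => ⟨fun y => ∑' j, Ψ (G j) q y,
    continuous_tsum (fun j => (Ψ (G j) q).continuous) hsum (hΨG q)⟩, fun x => ?_⟩
  have hpartial : ∀ J, ∑ j ∈ range J, ∑ q, Ψ (G j) q (s q x) = f x - G J x := fun J => by
    have : ∀ j, ∑ q, Ψ (G j) q (s q x) = G j x - G (j + 1) x := fun j => by
      simp [hGsucc]
    simp only [this, Finset.sum_range_sub', G, Function.iterate_zero, id]
  have hGx : Tendsto (fun J => G J x) atTop (𝓝 0) := by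
    refine squeeze_zero_norm (fun J => (G J).norm_coe_le_norm x |>.trans (hG J)) ?_
    simpa using (tendsto_pow_atTop_nhds_zero_of_lt_one hθ0 hθ1).mul_const ‖f‖
  have hsummable : Summable fun j => ∑ q, Ψ (G j) q (s q x) :=
    summable_sum fun q _ => Summable.of_norm_bounded hsum (hΨG q · _)
  have hlim := hsummable.hasSum.tendsto_sum_nat
  simp only [hpartial] at hlim
  calc f x = ∑' j, ∑ q, Ψ (G j) q (s q x) :=
        tendsto_nhds_unique (by simpa using tendsto_const_nhds.sub hGx) hlim
    _ = _ := Summable.tsum_finsetSum fun q _ => Summable.of_norm_bounded hsum (hΨG q · _)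

end OuterFunctions

section Grid

def block (N j : ℕ) : Set ℝ := Icc (j * N) (j * N + N - 1)

lemma abs_sub_le_of_mem_block {N j : ℕ} {u v : ℝ} (hu : u ∈ block N j) (hv : v ∈ block N j) :
    |u - v| ≤ N - 1 := by
  rw [abs_le]
  constructor <;> linarith [hu.1, hu.2, hv.1, hv.2]

lemma dvd_ceil_of_forall_notMem_block {N : ℕ} (hN : 0 < N) {v : ℝ} (hv : 0 ≤ v)
    (h : ∀ j, v ∉ block N j) : N ∣ ⌈v⌉₊ := by
  by_contra hdvd
  set c := ⌈v⌉₊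
  have hr : c % N ≠ 0 := fun h0 => hdvd (Nat.dvd_of_mod_eq_zero h0)
  have hc := Nat.div_add_mod' c N
  have hrN := Nat.mod_lt c hN
  have h1 : ((c / N * N + 1 : ℕ) : ℝ) ≤ c := by exact_mod_cast (by omega : c / N * N + 1 ≤ c)
  have h2 : (c + 1 : ℝ) ≤ ((c / N * N + N : ℕ) : ℝ) := by exact_mod_cast (by omega)
  have h3 : (c : ℝ) < v + 1 := Nat.ceil_lt_add_one hv
  have h4 : v ≤ c := Nat.le_ceil v
  push_cast at h1 h2
  exact h (c / N) ⟨by linarith, by linarith⟩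

open Classical in
lemma le_card_filter_forall_exists_block {N n : ℕ} (v : Fin n → ℝ) (hv : ∀ p, 0 ≤ v p) :
    N - n ≤ #{q : Fin N | ∀ p, ∃ j, v p + (q : ℕ) ∈ block N j} := by
  rcases Nat.eq_zero_or_pos N with rfl | hN
  · simp
  set B := ({q : Fin N | ∀ p, ∃ j, v p + (q : ℕ) ∈ block N j} : Finset (Fin N))
  have hBc : #Bᶜ ≤ n := by
    refine (Finset.card_le_card_of_injOn (fun q : Fin N => ((q : ℕ) : ZMod N))
      (t := univ.image fun p => -(⌈v p⌉₊ : ZMod N)) (fun q hq => ?_) (fun q _ q' _ h => ?_)).trans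
      (Finset.card_image_le.trans (by simp))
    · simp only [B, Finset.coe_compl, Set.mem_compl_iff, Finset.mem_coe, Finset.mem_filter,
        Finset.mem_univ, true_and, not_forall, not_exists] at hq
      obtain ⟨p, hp⟩ := hq
      have hdvd := dvd_ceil_of_forall_notMem_block hN (add_nonneg (hv p) (Nat.cast_nonneg _)) hp
      rw [Nat.ceil_add_natCast (hv p), ← ZMod.natCast_eq_zero_iff] at hdvd
      push_cast at hdvd
      simp only [Finset.coe_image, Finset.coe_univ, image_univ, Set.mem_range]
      exact ⟨p, by linear_combination -hdvd⟩
    · have := congrArg ZMod.val h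
      simp only [ZMod.val_natCast_of_lt q.2, ZMod.val_natCast_of_lt q'.2] at this
      exact Fin.ext this
  have := Finset.card_add_card_compl B
  simp only [Fintype.card_fin] at this
  omega

def numBlocks (δ : ℝ) : ℕ := ⌊δ⁻¹⌋₊ + 2

lemma div_lt_numBlocks {N : ℕ} (hN : 0 < N) {δ x : ℝ} (hδ : 0 < δ) (hx : x ∈ Icc (0 : ℝ) 1)
    {q : ℕ} (hq : q < N) : (x / δ + q) / N < numBlocks δ := by
  have hN' : (1 : ℝ) ≤ N := by exact_mod_cast hN
  have hq' : (q : ℝ) + 1 ≤ N := by exact_mod_cast hq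
  have h1 : x / δ ≤ δ⁻¹ := by
    rw [div_eq_mul_inv]
    exact mul_le_of_le_one_left (inv_nonneg.2 hδ.le) hx.2
  have h2 := Nat.lt_floor_add_one δ⁻¹
  have h3 : (0 : ℝ) ≤ ⌊δ⁻¹⌋₊ := Nat.cast_nonneg _
  rw [div_lt_iff₀ (by positivity), numBlocks]
  push_cast
  nlinarith

lemma lt_numBlocks_of_mem_block {N j : ℕ} (hN : 0 < N) {δ x : ℝ} (hδ : 0 < δ)
    (hx : x ∈ Icc (0 : ℝ) 1) {q : ℕ} (hq : q < N) (h : x / δ + q ∈ block N j) :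
    j < numBlocks δ := by
  have := (le_div_iff₀ (by exact_mod_cast hN : (0 : ℝ) < N)).2 h.1
  exact_mod_cast this.trans_lt (div_lt_numBlocks hN hδ hx hq)

def stair (N K : ℕ) (v : ℝ) : ℝ := ∑ j ∈ range K, ramp (v - (j * N + N - 1))

@[fun_prop]
lemma continuous_stair (N K : ℕ) : Continuous (stair N K) := by
  unfold stair; fun_prop

lemma stair_eq {N K j : ℕ} (hN : 0 < N) (hj : j < K) {v : ℝ} (h1 : j * N ≤ v)
    (h2 : v ≤ (j + 1) * N) : stair N K v = j + ramp (v - (j * N + N - 1)) := by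
  have hN' : (1 : ℝ) ≤ N := by exact_mod_cast hN
  have hbelow : ∀ i ∈ range j, ramp (v - (i * N + N - 1)) = 1 := fun i hi => by
    have : (i : ℝ) + 1 ≤ j := by exact_mod_cast Finset.mem_range.1 hi
    exact ramp_of_one_le (by nlinarith)
  have habove : ∀ i ∈ Finset.Ico (j + 1) K, ramp (v - (i * N + N - 1)) = 0 := fun i hi => by
    have : (j : ℝ) + 1 ≤ i := by exact_mod_cast (Finset.mem_Ico.1 hi).1
    exact ramp_of_nonpos (by nlinarith)
  rw [stair, ← Finset.sum_range_add_sum_Ico _ hj, Finset.sum_range_succ,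
    Finset.sum_congr rfl hbelow, Finset.sum_eq_zero habove]
  simp

lemma stair_mem_Icc {N K j : ℕ} (hN : 0 < N) (hj : j < K) {v : ℝ} (h1 : j * N ≤ v)
    (h2 : v ≤ (j + 1) * N) : stair N K v ∈ Icc (j : ℝ) (j + 1) := by
  rw [stair_eq hN hj h1 h2]
  exact ⟨by linarith [ramp_nonneg (v - (j * N + N - 1))],
    by linarith [ramp_le_one (v - (j * N + N - 1))]⟩

lemma stair_nonneg (N K : ℕ) (v : ℝ) : 0 ≤ stair N K v :=
  Finset.sum_nonneg fun _ _ => ramp_nonneg _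

lemma stair_le (N K : ℕ) (v : ℝ) : stair N K v ≤ K := by
  unfold stair
  simpa using Finset.sum_le_card_nsmul (range K) _ 1 fun _ _ => ramp_le_one _

lemma abs_mul_stair_sub_le {N K : ℕ} (hN : 0 < N) {v : ℝ} (hv : 0 ≤ v) (hvK : v / N < K) :
    |N * stair N K v - v| ≤ N := by
  have hN' : (0 : ℝ) < N := by exact_mod_cast hN
  set j := ⌊v / N⌋₊
  have hv1 : j * N ≤ v := (le_div_iff₀ hN').1 (Nat.floor_le (by positivity))
  have hv2 : v ≤ (j + 1) * N := (div_le_iff₀ hN').1 (Nat.lt_floor_add_one _).le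
  obtain ⟨hs1, hs2⟩ := stair_mem_Icc hN ((Nat.floor_lt (by positivity)).2 hvK) hv1 hv2
  rw [abs_le]
  constructor <;> nlinarith

lemma stair_of_mem_block {N K j : ℕ} (hN : 0 < N) (hj : j < K) {v : ℝ} (hv : v ∈ block N j) :
    stair N K v = j := by
  rw [stair_eq hN hj hv.1 (by linarith [hv.2]), ramp_of_nonpos (by linarith [hv.2]), add_zero]

end Grid

lemma eq_of_sum_mul_pow_eq {n K : ℕ} {t t' : Fin n → ℕ} (ht : ∀ p, t p < K) (ht' : ∀ p, t' p < K)
    (h : ∑ p, (t p : ℝ) * K ^ (p : ℕ) = ∑ p, (t' p : ℝ) * K ^ (p : ℕ)) : t = t' := by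
  have := finFunctionFinEquiv.injective (a₁ := fun p => (⟨t p, ht p⟩ : Fin K))
    (a₂ := fun p => ⟨t' p, ht' p⟩)
    (Fin.ext (by simp only [finFunctionFinEquiv_apply]; exact_mod_cast h))
  exact funext fun p => congrArg Fin.val (congrFun this p)

lemma exists_forall_le_abs_add_mul {ι : Type*} (S : Finset ι) {α β : ι → ℝ}
    (hβ : ∀ i ∈ S, β i ≠ 0) {c : ℝ} (hc : 0 < c) :
    ∃ η ∈ Ioo 0 c, ∃ g > 0, ∀ i ∈ S, g ≤ |α i + η * β i| := by
  obtain ⟨η, hη, hηS⟩ :=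
    ((Ioo_infinite hc).sdiff (S.image fun i => -α i / β i).finite_toSet).nonempty
  have hne : ∀ i ∈ S, α i + η * β i ≠ 0 := fun i hi h0 => hηS <| Finset.mem_coe.2 <|
    Finset.mem_image.2 ⟨i, hi, by field_simp [hβ i hi]; linarith⟩
  refine ⟨η, hη, ?_⟩
  rcases S.eq_empty_or_nonempty with rfl | hS
  · exact ⟨1, one_pos, by simp⟩
  obtain ⟨i₀, hi₀, hmin⟩ := S.exists_min_image (fun i => |α i + η * β i|) hS
  exact ⟨_, abs_pos.2 (hne i₀ hi₀), hmin⟩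

lemma exists_pos_forall_dist_le {Y ι Z : Type*} [Fintype ι] [PseudoMetricSpace Y] [CompactSpace Y]
    [PseudoMetricSpace Z] (f : ι → C(Y, Z)) {ε : ℝ} (hε : 0 < ε) :
    ∃ d > 0, ∀ i y z, dist y z ≤ d → dist (f i y) (f i z) ≤ ε := by
  obtain ⟨d, hd, h⟩ := Metric.uniformContinuous_iff_le.1
    (CompactSpace.uniformContinuous_of_continuous (continuous_pi fun i => (f i).continuous)) ε hε
  exact ⟨d, hd, fun i y z hyz => (dist_le_pi_dist _ _ i).trans (h hyz)⟩

section InnerFunctions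

open scoped unitInterval

variable {N n : ℕ}

def InCell (δ : ℝ) (q : Fin N) (t : Fin n → ℕ) (x : Fin n → I) : Prop :=
  ∀ p, (x p : ℝ) / δ + (q : ℕ) ∈ block N (t p)

lemma InCell.mem_piFinset {δ : ℝ} (hδ : 0 < δ) {q : Fin N} {t : Fin n → ℕ} {x : Fin n → I}
    (h : InCell δ q t x) : t ∈ Fintype.piFinset fun _ => range (numBlocks δ) :=
  Fintype.mem_piFinset.2 fun p =>
    Finset.mem_range.2 (lt_numBlocks_of_mem_block q.pos hδ (x p).2 q.2 (h p))

def innerSum (φ : Fin N → Fin n → C(I, ℝ)) (q : Fin N) : C(Fin n → I, ℝ) :=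
  ⟨fun x => ∑ p, φ q p (x p), by fun_prop⟩

def IsSeparatedAt (φ : Fin N → Fin n → C(I, ℝ)) (δ a b : ℝ) : Prop :=
  ∀ q t t' x y, InCell δ q t x → InCell δ q t' y →
    (t = t' → |innerSum φ q x - innerSum φ q y| ≤ a) ∧
    (t ≠ t' → b ≤ |innerSum φ q x - innerSum φ q y|)

lemma abs_innerSum_sub_le {φ ψ : Fin N → Fin n → C(I, ℝ)} {r : ℝ}
    (h : ∀ q p, dist (ψ q p) (φ q p) ≤ r) (q : Fin N) (x : Fin n → I) :
    |innerSum ψ q x - innerSum φ q x| ≤ n * r := by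
  simp only [innerSum, ContinuousMap.coe_mk, ← Finset.sum_sub_distrib]
  refine (Finset.abs_sum_le_sum_abs _ _).trans ?_
  simpa [← Real.dist_eq] using
    Finset.sum_le_sum (s := univ) fun p _ => (ContinuousMap.dist_apply_le_dist (x p)).trans (h q p)

lemma IsSeparatedAt.of_dist_le {φ ψ : Fin N → Fin n → C(I, ℝ)} {δ a b a' b' r : ℝ}
    (h : IsSeparatedAt φ δ a b) (hr : ∀ q p, dist (ψ q p) (φ q p) ≤ r)
    (ha : a + 2 * n * r ≤ a') (hb : b' ≤ b - 2 * n * r) : IsSeparatedAt ψ δ a' b' := by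
  intro q t t' x y hx hy
  have hx' := abs_innerSum_sub_le hr q x
  have hy' := abs_innerSum_sub_le hr q y
  have hxy :
      |(innerSum ψ q x - innerSum ψ q y) - (innerSum φ q x - innerSum φ q y)| ≤ 2 * n * r := by
    calc _ = |(innerSum ψ q x - innerSum φ q x) - (innerSum ψ q y - innerSum φ q y)| := by ring_nf
      _ ≤ _ := (abs_sub _ _).trans (by linarith)
  obtain ⟨hsame, hdiff⟩ := h q t t' x y hx hy
  have h1 := abs_sub_abs_le_abs_sub (innerSum ψ q x - innerSum ψ q y)
    (innerSum φ q x - innerSum φ q y)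
  have h2 := abs_sub_abs_le_abs_sub (innerSum φ q x - innerSum φ q y)
    (innerSum ψ q x - innerSum ψ q y)
  rw [abs_sub_comm (innerSum φ q x - innerSum φ q y)] at h2
  exact ⟨fun htt => by linarith [hsame htt], fun htt => by linarith [hdiff htt]⟩

/-- On the cell `block N j` of the grid of `q` this is constant, equal to the value of `φ q p` at
the left end of the cell plus `η K ^ p j`; the weights `K ^ p` make the sums over distinct cells
differ for all but finitely many `η`. -/
def refinement (φ : Fin N → Fin n → C(I, ℝ)) (δ η : ℝ) (q : Fin N) (p : Fin n) : C(I, ℝ) :=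
  ⟨fun x => φ q p (projIcc 0 1 zero_le_one
      (δ * (N * stair N (numBlocks δ) (x / δ + (q : ℕ)) - (q : ℕ)))) +
    η * numBlocks δ ^ (p : ℕ) * stair N (numBlocks δ) (x / δ + (q : ℕ)), by fun_prop⟩

lemma refinement_apply_of_mem_block {φ : Fin N → Fin n → C(I, ℝ)} {δ η : ℝ} (hδ : 0 < δ)
    {q : Fin N} {p : Fin n} {j : ℕ} {x : I} (hx : (x : ℝ) / δ + (q : ℕ) ∈ block N j) :
    refinement φ δ η q p x =
      φ q p (projIcc 0 1 zero_le_one (δ * (N * j - (q : ℕ)))) + η * numBlocks δ ^ (p : ℕ) * j := by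
  simp only [refinement, ContinuousMap.coe_mk,
    stair_of_mem_block q.pos (lt_numBlocks_of_mem_block q.pos hδ x.2 q.2 hx) hx]

lemma innerSum_refinement_of_inCell {φ : Fin N → Fin n → C(I, ℝ)} {δ η : ℝ} (hδ : 0 < δ)
    {q : Fin N} {t : Fin n → ℕ} {x : Fin n → I} (hx : InCell δ q t x) :
    innerSum (refinement φ δ η) q x =
      ∑ p, φ q p (projIcc 0 1 zero_le_one (δ * (N * t p - (q : ℕ)))) +
        η * ∑ p, (t p : ℝ) * numBlocks δ ^ (p : ℕ) := by
  simp only [innerSum, ContinuousMap.coe_mk, refinement_apply_of_mem_block hδ (hx _),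
    Finset.sum_add_distrib, Finset.mul_sum]
  congr 1
  exact Finset.sum_congr rfl fun p _ => by ring

lemma dist_refinement_le {φ : Fin N → Fin n → C(I, ℝ)} {δ η ε : ℝ} (hδ : 0 < δ) (hη : 0 ≤ η)
    {q : Fin N} {p : Fin n} (hφ : ∀ y z : I, dist y z ≤ N * δ → dist (φ q p y) (φ q p z) ≤ ε) :
    dist (refinement φ δ η q p) (φ q p) ≤ ε + η * numBlocks δ ^ n := by
  set K := numBlocks δ
  have hK : (1 : ℝ) ≤ K := by
    simp only [K, numBlocks]; push_cast; linarith [Nat.cast_nonneg (α := ℝ) ⌊δ⁻¹⌋₊]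
  refine ContinuousMap.dist_le_iff_of_nonempty.2 fun x => ?_
  set v := (x : ℝ) / δ + (q : ℕ)
  have hv : 0 ≤ v := add_nonneg (div_nonneg x.2.1 hδ.le) (Nat.cast_nonneg _)
  have hclose : dist (projIcc 0 1 zero_le_one (δ * (N * stair N K v - (q : ℕ)))) x ≤ N * δ := by
    rw [Subtype.dist_eq, Real.dist_eq]
    conv_lhs => rw [← projIcc_val zero_le_one x]
    refine (abs_projIcc_sub_projIcc _).trans ?_
    have hx : δ * (N * stair N K v - (q : ℕ)) - x = δ * (N * stair N K v - v) := by
      simp only [v]; field_simp; ring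
    rw [hx, abs_mul, abs_of_pos hδ, mul_comm]
    exact mul_le_mul_of_nonneg_right
      (abs_mul_stair_sub_le q.pos hv (div_lt_numBlocks q.pos hδ x.2 q.2)) hδ.le
  have hpert : |η * K ^ (p : ℕ) * stair N K v| ≤ η * K ^ n := by
    rw [abs_of_nonneg (by have := stair_nonneg N K v; positivity), mul_assoc]
    refine mul_le_mul_of_nonneg_left
      ((mul_le_mul_of_nonneg_left (stair_le N K v) (by positivity)).trans ?_) hη
    rw [← pow_succ]
    exact pow_le_pow_right₀ hK p.2
  rw [Real.dist_eq]
  simp only [refinement, ContinuousMap.coe_mk]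
  calc _ ≤ |φ q p (projIcc 0 1 zero_le_one (δ * (N * stair N K v - (q : ℕ)))) - φ q p x| +
        |η * K ^ (p : ℕ) * stair N K v| := by
        rw [add_sub_right_comm]; exact abs_add_le _ _
    _ ≤ _ := add_le_add (by rw [← Real.dist_eq]; exact hφ _ _ hclose) hpert

lemma exists_isSeparatedAt_refinement (φ : Fin N → Fin n → C(I, ℝ)) {δ c : ℝ} (hδ : 0 < δ)
    (hc : 0 < c) : ∃ η ∈ Ioo 0 c, ∃ g > 0, IsSeparatedAt (refinement φ δ η) δ 0 g := by
  classical
  set K := numBlocks δ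
  set A : Fin N → (Fin n → ℕ) → ℝ := fun q t =>
    ∑ p, φ q p (projIcc 0 1 zero_le_one (δ * (N * t p - (q : ℕ))))
  set W : (Fin n → ℕ) → ℝ := fun t => ∑ p, (t p : ℝ) * K ^ (p : ℕ)
  set T := Fintype.piFinset fun _ : Fin n => range K
  obtain ⟨η, hη, g, hg, hgap⟩ := exists_forall_le_abs_add_mul
    ((Finset.univ ×ˢ T ×ˢ T).filter fun i : Fin N × (Fin n → ℕ) × (Fin n → ℕ) => i.2.1 ≠ i.2.2)
    (α := fun i => A i.1 i.2.1 - A i.1 i.2.2) (β := fun i => W i.2.1 - W i.2.2) (fun i hi => by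
      simp only [T, Finset.mem_filter, Finset.mem_product, Fintype.mem_piFinset,
        Finset.mem_range, Finset.mem_univ, true_and] at hi
      exact sub_ne_zero.2 fun h => hi.2 (eq_of_sum_mul_pow_eq hi.1.1 hi.1.2 h)) hc
  refine ⟨η, hη, g, hg, fun q t t' x y hx hy => ?_⟩
  rw [innerSum_refinement_of_inCell hδ hx, innerSum_refinement_of_inCell hδ hy]
  refine ⟨by rintro rfl; simp, fun htt => ?_⟩
  have := hgap (q, t, t') (Finset.mem_filter.2
    ⟨Finset.mem_product.2 ⟨Finset.mem_univ q,
      Finset.mem_product.2 ⟨hx.mem_piFinset hδ, hy.mem_piFinset hδ⟩⟩, htt⟩)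
  convert this using 2
  ring

theorem exists_isSeparatedAt_near (φ : Fin N → Fin n → C(I, ℝ)) {ε δ₀ : ℝ} (hε : 0 < ε)
    (hδ₀ : 0 < δ₀) :
    ∃ ψ, dist ψ φ < ε ∧ ∃ δ g, 0 < δ ∧ δ ≤ δ₀ ∧ 0 < g ∧ IsSeparatedAt ψ δ 0 g := by
  obtain ⟨d, hd, hφ⟩ :=
    exists_pos_forall_dist_le (fun i : Fin N × Fin n => φ i.1 i.2) (ε := ε / 4) (by positivity)
  set δ := min δ₀ (d / (N + 1))
  have hδ : 0 < δ := lt_min hδ₀ (by positivity)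
  have hNδ : N * δ ≤ d := by
    have : N * (d / (N + 1)) ≤ d := by
      rw [mul_div_assoc', div_le_iff₀ (by positivity)]; nlinarith
    exact (mul_le_mul_of_nonneg_left (min_le_right _ _) (Nat.cast_nonneg N)).trans this
  have hK : (0 : ℝ) < numBlocks δ := Nat.cast_pos.2 (by simp [numBlocks])
  obtain ⟨η, ⟨hη, hηε⟩, g, hg, hsep⟩ :=
    exists_isSeparatedAt_refinement φ hδ (c := ε / (4 * numBlocks δ ^ n)) (by positivity)
  refine ⟨refinement φ δ η, ?_, δ, g, hδ, min_le_left _ _, hg, hsep⟩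
  have hηK : η * numBlocks δ ^ n ≤ ε / 4 := by
    rw [lt_div_iff₀ (by positivity)] at hηε; linarith
  have hdist : ∀ q p, dist (refinement φ δ η q p) (φ q p) ≤ ε / 2 := fun q p =>
    (dist_refinement_le hδ hη.le fun y z hyz => hφ (q, p) y z (hyz.trans hNδ)).trans
      (by linarith)
  calc dist (refinement φ δ η) φ ≤ ε / 2 := (dist_pi_le_iff (by positivity)).2 fun q =>
        (dist_pi_le_iff (by positivity)).2 (hdist q)
    _ < ε := by linarith

theorem exists_forall_isSeparatedAt (N n : ℕ) :
    ∃ φ : Fin N → Fin n → C(I, ℝ),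
      ∀ δ₀ > 0, ∃ δ a, 0 < δ ∧ δ ≤ δ₀ ∧ 0 < a ∧ IsSeparatedAt φ δ a (3 * a) := by
  have : BaireSpace (Fin N → Fin n → C(I, ℝ)) := BaireSpace.of_completelyPseudoMetrizable
  -- within `g / (8 (n + 1))` of `ψ` the clusters still have diameter `g / 4` and gaps `3g / 4`
  let O : ℕ → Set (Fin N → Fin n → C(I, ℝ)) := fun k =>
    ⋃ (ψ : Fin N → Fin n → C(I, ℝ)) (δ : ℝ) (g : ℝ)
      (_ : 0 < δ ∧ δ ≤ 1 / (k + 1) ∧ 0 < g ∧ IsSeparatedAt ψ δ 0 g),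
      Metric.ball ψ (g / (8 * (n + 1)))
  have hopen : ∀ k, IsOpen (O k) := fun k => isOpen_iUnion fun _ => isOpen_iUnion fun _ =>
    isOpen_iUnion fun _ => isOpen_iUnion fun _ => Metric.isOpen_ball
  have hdense : ∀ k, Dense (O k) := fun k => Metric.dense_iff.2 fun φ r hr => by
    obtain ⟨ψ, hψ, δ, g, hδ, hδk, hg, hsep⟩ :=
      exists_isSeparatedAt_near φ hr (δ₀ := 1 / (k + 1)) (by positivity)
    exact ⟨ψ, Metric.mem_ball.2 hψ, mem_iUnion.2 ⟨ψ, mem_iUnion.2 ⟨δ, mem_iUnion.2 ⟨g,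
      mem_iUnion.2 ⟨⟨hδ, hδk, hg, hsep⟩, Metric.mem_ball_self (by positivity)⟩⟩⟩⟩⟩
  obtain ⟨φ, hφ⟩ := (dense_iInter_of_isOpen_nat hopen hdense).nonempty
  refine ⟨φ, fun δ₀ hδ₀ => ?_⟩
  obtain ⟨k, hk⟩ := exists_nat_one_div_lt hδ₀
  have hφk := mem_iInter.1 hφ k
  simp only [O, mem_iUnion, Metric.mem_ball] at hφk
  obtain ⟨ψ, δ, g, ⟨hδ, hδk, hg, hψ⟩, hdist⟩ := hφk
  refine ⟨δ, g / 4, hδ, hδk.trans hk.le, by positivity,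
    hψ.of_dist_le (r := g / (8 * (n + 1))) (fun q p => ((dist_le_pi_dist _ _ p).trans
      (dist_le_pi_dist _ _ q)).trans hdist.le) ?_ ?_⟩
  all_goals
    have : 2 * n * (g / (8 * (n + 1))) ≤ g / 4 := by
      rw [mul_div_assoc', div_le_div_iff₀ (by positivity) (by positivity)]
      nlinarith
    linarith

theorem separatesAtEveryScale_innerSum {φ : Fin N → Fin n → C(I, ℝ)}
    (hφ : ∀ δ₀ > 0, ∃ δ a, 0 < δ ∧ δ ≤ δ₀ ∧ 0 < a ∧ IsSeparatedAt φ δ a (3 * a)) :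
    SeparatesAtEveryScale (innerSum φ) (N - n) := by
  classical
  intro d hd
  obtain ⟨δ, a, hδ, hδd, ha, hsep⟩ := hφ (d / (N + 1)) (by positivity)
  let U : Fin N → Set (Fin n → I) := fun q => {x | ∀ p, ∃ j, (x p : ℝ) / δ + (q : ℕ) ∈ block N j}
  let τ : Fin N → (Fin n → I) → Fin n → ℕ := fun q x p =>
    if h : ∃ j, (x p : ℝ) / δ + (q : ℕ) ∈ block N j then h.choose else 0
  have hcell : ∀ q, ∀ x ∈ U q, InCell δ q (τ q x) x := fun q x hx p => by
    simp only [τ, dif_pos (hx p)]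
    exact (hx p).choose_spec
  refine ⟨Fin n → ℕ, U, τ, a, ha, fun x => ?_, fun q => ⟨?_, fun x hx y hy =>
    ⟨fun hxy => ⟨?_, ((hsep q _ _ x y (hcell q x hx) (hcell q y hy)).1 hxy)⟩,
      fun hxy => (hsep q _ _ x y (hcell q x hx) (hcell q y hy)).2 hxy⟩⟩⟩
  · convert le_card_filter_forall_exists_block (N := N) (fun p => (x p : ℝ) / δ)
      fun p => div_nonneg (x p).2.1 hδ.le
    exact Iff.rfl
  · refine (Fintype.piFinset fun _ => range (numBlocks δ)).finite_toSet.subset ?_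
    rintro _ ⟨x, hx, rfl⟩
    exact (hcell q x hx).mem_piFinset hδ
  · refine (dist_pi_le_iff hd.le).2 fun p => ?_
    have hxp := hcell q x hx p
    rw [hxy] at hxp
    have hxy' := abs_sub_le_of_mem_block hxp (hcell q y hy p)
    rw [add_sub_add_right_eq_sub, ← sub_div, abs_div, abs_of_pos hδ, div_le_iff₀ hδ] at hxy'
    rw [Subtype.dist_eq, Real.dist_eq]
    have hN : (N : ℝ) * δ ≤ d := by
      rw [le_div_iff₀ (by positivity)] at hδd
      nlinarith
    nlinarith

end InnerFunctions

end

end KolmogorovArnold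

open KolmogorovArnold unitInterval

/-- Kolmogorov–Arnold representation theorem. -/
theorem kolmogorov_arnold (n : ℕ) (f : (Fin n → ℝ) → ℝ)
    (hf : ContinuousOn f (Set.Icc 0 1)) :
    ∃ (Φ : Fin (2 * n + 1) → ℝ → ℝ) (φ : Fin (2 * n + 1) → Fin n → ℝ → ℝ),
      (∀ q, Continuous (Φ q)) ∧
      (∀ q p, ContinuousOn (φ q p) (Set.Icc 0 1)) ∧
      ∀ x ∈ Set.Icc (0 : Fin n → ℝ) 1,
        f x = ∑ q, Φ q (∑ p, φ q p (x p)) := by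
  obtain ⟨φ, hφ⟩ := exists_forall_isSeparatedAt (2 * n + 1) n
  let F : C(Fin n → I, ℝ) := ⟨fun x => f fun p => x p, hf.comp_continuous (by fun_prop)
    fun x => ⟨fun p => (x p).2.1, fun p => (x p).2.2⟩⟩
  obtain ⟨Φ, hΦ⟩ := exists_sum_comp_eq (separatesAtEveryScale_innerSum hφ) (by omega) F
  refine ⟨fun q => Φ q, fun q p y => φ q p (projIcc 0 1 zero_le_one y), fun q => (Φ q).continuous,
    fun q p => ((φ q p).continuous.comp continuous_projIcc).continuousOn, fun x hx => ?_⟩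
  simpa [F, innerSum, projIcc_of_mem _ (⟨hx.1 _, hx.2 _⟩ : x _ ∈ Icc (0 : ℝ) 1)] using
    hΦ fun p => ⟨x p, hx.1 p, hx.2 p⟩
end

section
/- Let σ : ℝ → ℝ be continuous, bounded, and non-constant (or more specifically sigmoidal: σ(t) → 1 as t → ∞ and σ(t) → 0 as t → -∞). Then the set of functions of the form x ↦ Σ_{i=1}^{N} v_i σ(⟨w_i, x⟩ + b_i), with N ∈ ℕ, v_i, b_i ∈ ℝ, w_i ∈ ℝ^n, is dense in C([0,1]^n, ℝ) with respect to the supremum norm. -/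
/-!
By Stone–Weierstrass the exponential ridge functions `x ↦ exp ⟨w, x⟩`, which are closed under
products, span a dense subalgebra of `C(s, ℝ)` for compact `s ⊆ ℝⁿ`, so it suffices to approximate
every continuous `g` on an interval by sums `∑ vᵢ σ (αᵢ t + βᵢ)`. On a grid of mesh `1`, `g` is
close to the step function `g 0 + ∑ᵢ (g (i + 1) - g i) H (t - i - 1/2)`, and the Heaviside
function `H` is close to `σ (k ·)` for large `k` except near `0`; only the jump nearest to `t`
is affected, and that jump is small because `g` has small oscillation on the grid.
-/

open Filter Topology Set

noncomputable section

def heaviside (u : ℝ) : ℝ := if 0 ≤ u then 1 else 0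

theorem half_le_abs_sub_add_half_of_ne_floor {r : ℝ} (hr : 0 ≤ r) {i : ℕ} (hi : i ≠ ⌊r⌋₊) :
    1 / 2 ≤ |r - (i + 1 / 2)| := by
  rcases hi.lt_or_gt with hi | hi
  · have : (i : ℝ) + 1 ≤ ⌊r⌋₊ := by exact_mod_cast hi
    rw [abs_of_nonneg] <;> linarith [Nat.floor_le hr]
  · have : (⌊r⌋₊ : ℝ) + 1 ≤ i := by exact_mod_cast hi
    rw [abs_of_neg] <;> linarith [Nat.lt_floor_add_one r]

theorem abs_sub_floor_add_half_le {r : ℝ} (hr : 0 ≤ r) : |r - ⌊r + 1 / 2⌋₊| ≤ 1 / 2 := by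
  have := Nat.floor_le (by linarith : 0 ≤ r + 1 / 2)
  rw [abs_le]
  constructor <;> linarith [Nat.lt_floor_add_one (r + 1 / 2)]

theorem floor_add_half_le {r : ℝ} {m : ℕ} (hr : r ∈ Icc (0 : ℝ) m) : ⌊r + 1 / 2⌋₊ ≤ m :=
  Nat.lt_succ_iff.1 <| (Nat.floor_lt (by linarith [hr.1])).2 (by push_cast; linarith [hr.2])

theorem add_sum_range_sub_mul_heaviside (y : ℕ → ℝ) {m : ℕ} {r : ℝ} (hr : r ∈ Icc (0 : ℝ) m) :
    y 0 + ∑ i ∈ Finset.range m, (y (i + 1) - y i) * heaviside (r - (i + 1 / 2)) =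
      y ⌊r + 1 / 2⌋₊ := by
  set j := ⌊r + 1 / 2⌋₊
  have hjump : ∀ i : ℕ, heaviside (r - (i + 1 / 2)) = if i < j then 1 else 0 := by
    intro i
    have : 0 ≤ r - (i + 1 / 2) ↔ i < j := by
      rw [sub_nonneg, Nat.lt_iff_add_one_le, Nat.le_floor_iff (by linarith [hr.1])]
      push_cast
      constructor <;> intro h <;> linarith
    simp only [heaviside, this]
  simp only [hjump, mul_ite, mul_one, mul_zero]
  have hjm := floor_add_half_le hr
  have hfilter : (Finset.range m).filter (· < j) = Finset.range j := by
    ext i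
    simp only [Finset.mem_filter, Finset.mem_range]
    omega
  rw [← Finset.sum_filter, hfilter, Finset.sum_range_sub]
  ring

theorem exists_abs_le_of_tendsto_atBot_atTop {f : ℝ → ℝ} (hf : Continuous f) {a b : ℝ}
    (ha : Tendsto f atBot (𝓝 a)) (hb : Tendsto f atTop (𝓝 b)) : ∃ M, ∀ u, |f u| ≤ M := by
  have hfar : ∀ᶠ u in cocompact ℝ, |f u| ≤ max |a| |b| + 1 := by
    rw [cocompact_eq_atBot_atTop, eventually_sup]
    exact ⟨ha.abs.eventually (eventually_le_nhds (by linarith [le_max_left |a| |b|])),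
      hb.abs.eventually (eventually_le_nhds (by linarith [le_max_right |a| |b|]))⟩
  obtain ⟨t, ht, htc⟩ := mem_cocompact.1 hfar
  obtain ⟨C, hC⟩ := ht.exists_bound_of_continuousOn hf.continuousOn
  refine ⟨max C (max |a| |b| + 1), fun u => ?_⟩
  by_cases hu : u ∈ t
  · exact (hC u hu).trans (le_max_left _ _)
  · exact (htc hu).trans (le_max_right _ _)

def sigmoidSpan (σ : ℝ → ℝ) : Submodule ℝ (ℝ → ℝ) :=
  Submodule.span ℝ (range fun p : ℝ × ℝ => fun t => σ (p.1 * t + p.2))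

section Sigmoid

variable {σ : ℝ → ℝ} {M : ℝ}

theorem sigmoid_mem_sigmoidSpan (α β : ℝ) : (fun t => σ (α * t + β)) ∈ sigmoidSpan σ :=
  Submodule.subset_span ⟨(α, β), rfl⟩

theorem comp_affine_mem_sigmoidSpan {F : ℝ → ℝ} (hF : F ∈ sigmoidSpan σ) (α β : ℝ) :
    (fun t => F (α * t + β)) ∈ sigmoidSpan σ := by
  suffices sigmoidSpan σ ≤ (sigmoidSpan σ).comap (LinearMap.funLeft ℝ ℝ fun t => α * t + β) from
    this hF
  refine Submodule.span_le.2 ?_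
  rintro _ ⟨p, rfl⟩
  rw [SetLike.mem_coe, Submodule.mem_comap]
  convert sigmoid_mem_sigmoidSpan (σ := σ) (p.1 * α) (p.1 * β + p.2) using 1
  ext t
  simp only [LinearMap.funLeft_apply]
  ring_nf

theorem exists_abs_heaviside_sub_sigmoid_mul_le (hσ1 : Tendsto σ atTop (𝓝 1))
    (hσ0 : Tendsto σ atBot (𝓝 0)) {η ρ : ℝ} (hη : 0 < η) (hρ : 0 < ρ) :
    ∃ k, ∀ u, ρ ≤ |u| → |heaviside u - σ (k * u)| ≤ η := by
  obtain ⟨K₁, hK₁⟩ := eventually_atTop.1 (hσ1.eventually (Metric.closedBall_mem_nhds 1 hη))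
  obtain ⟨K₀, hK₀⟩ := eventually_atBot.1 (hσ0.eventually (Metric.closedBall_mem_nhds 0 hη))
  set K := max (max K₁ (-K₀)) 0
  have hK : K ≤ K / ρ * ρ := by rw [div_mul_cancel₀ _ hρ.ne']
  refine ⟨K / ρ, fun u hu => ?_⟩
  have hKu : K ≤ K / ρ * |u| := hK.trans (by gcongr)
  rcases le_or_gt 0 u with hu0 | hu0
  · rw [abs_of_nonneg hu0] at hKu
    rw [heaviside, if_pos hu0, abs_sub_comm, ← Real.dist_eq]
    exact hK₁ _ ((le_max_left _ _).trans ((le_max_left _ _).trans hKu))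
  · rw [abs_of_neg hu0] at hKu
    rw [heaviside, if_neg hu0.not_ge, zero_sub, abs_neg, ← sub_zero (σ _), ← Real.dist_eq]
    exact hK₀ _ (by linarith [le_max_right K₁ (-K₀), le_max_left (max K₁ (-K₀)) 0])

theorem abs_heaviside_sub_le (hM : ∀ u, |σ u| ≤ M) (u v : ℝ) :
    |heaviside u - σ v| ≤ 1 + M :=
  (abs_sub _ _).trans (add_le_add (by unfold heaviside; split_ifs <;> simp) (hM v))

theorem abs_sum_mul_heaviside_sub_sigmoid_le (hM : ∀ u, |σ u| ≤ M) {k η δ : ℝ}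
    (hk : ∀ u, 1 / 2 ≤ |u| → |heaviside u - σ (k * u)| ≤ η) (hδ : 0 ≤ δ) {c : ℕ → ℝ} {m : ℕ}
    (hc : ∀ i < m, |c i| ≤ δ) {r : ℝ} (hr : 0 ≤ r) :
    |∑ i ∈ Finset.range m, c i * (heaviside (r - (i + 1 / 2)) - σ (k * (r - (i + 1 / 2))))|
      ≤ (∑ i ∈ Finset.range m, |c i|) * η + δ * (1 + M) := by
  have hη : 0 ≤ η := (abs_nonneg _).trans (hk 1 (by norm_num))
  have hM1 : 0 ≤ 1 + M := (abs_nonneg _).trans (abs_heaviside_sub_le hM 0 0)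
  -- only the jump nearest to `r`, at index `⌊r⌋₊`, is not resolved by `σ (k * ·)`
  have hterm : ∀ i ∈ Finset.range m,
      |c i * (heaviside (r - (i + 1 / 2)) - σ (k * (r - (i + 1 / 2))))|
        ≤ |c i| * η + if i = ⌊r⌋₊ then δ * (1 + M) else 0 := by
    intro i hi
    rw [abs_mul]
    split_ifs with hi₀
    · exact (mul_le_mul (hc i (Finset.mem_range.1 hi)) (abs_heaviside_sub_le hM _ _)
        (abs_nonneg _) hδ).trans (le_add_of_nonneg_left (by positivity))
    · rw [add_zero]
      exact mul_le_mul_of_nonneg_left (hk _ (half_le_abs_sub_add_half_of_ne_floor hr hi₀))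
        (abs_nonneg _)
  calc _ ≤ ∑ i ∈ Finset.range m,
          |c i * (heaviside (r - (i + 1 / 2)) - σ (k * (r - (i + 1 / 2))))| :=
        Finset.abs_sum_le_sum_abs _ _
    _ ≤ ∑ i ∈ Finset.range m, (|c i| * η + if i = ⌊r⌋₊ then δ * (1 + M) else 0) :=
        Finset.sum_le_sum hterm
    _ ≤ (∑ i ∈ Finset.range m, |c i|) * η + δ * (1 + M) := by
        rw [Finset.sum_add_distrib, Finset.sum_ite_eq', ← Finset.sum_mul]
        split_ifs <;> nlinarith

theorem exists_mem_sigmoidSpan_near_of_oscillation_le (hM : ∀ u, |σ u| ≤ M)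
    (hσ1 : Tendsto σ atTop (𝓝 1)) (hσ0 : Tendsto σ atBot (𝓝 0)) {G : ℝ → ℝ} {m : ℕ} {δ : ℝ}
    (hG : ∀ r ∈ Icc (0 : ℝ) m, ∀ r' ∈ Icc (0 : ℝ) m, |r - r'| ≤ 1 → |G r - G r'| ≤ δ)
    {η : ℝ} (hη : 0 < η) :
    ∃ F ∈ sigmoidSpan σ, ∀ r ∈ Icc (0 : ℝ) m, |G r - F r| ≤ (M + 2) * δ + η := by
  have h0 : (0 : ℝ) ∈ Icc (0 : ℝ) m := ⟨le_rfl, Nat.cast_nonneg m⟩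
  have hδ : 0 ≤ δ := by simpa using hG 0 h0 0 h0 (by simp)
  set c : ℕ → ℝ := fun i => G (i + 1) - G i
  have hc : ∀ i < m, |c i| ≤ δ := fun i hi =>
    hG _ ⟨by positivity, by exact_mod_cast hi⟩ _ ⟨by positivity, by exact_mod_cast hi.le⟩
      (by simp)
  set C := |G 0| + ∑ i ∈ Finset.range m, |c i|
  have hC : 0 ≤ C := by positivity
  obtain ⟨k, hk⟩ := exists_abs_heaviside_sub_sigmoid_mul_le hσ1 hσ0
    (div_pos hη (by linarith : 0 < C + 1)) (by norm_num : (0 : ℝ) < 1 / 2)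
  refine ⟨G 0 • (fun t => σ (0 * t + k * (1 / 2))) +
      ∑ i ∈ Finset.range m, c i • fun t => σ (k * t + -(k * (i + 1 / 2))),
    add_mem (Submodule.smul_mem _ _ (sigmoid_mem_sigmoidSpan _ _))
      (Submodule.sum_mem _ fun i _ => Submodule.smul_mem _ _ (sigmoid_mem_sigmoidSpan _ _)),
    fun r hr => ?_⟩
  set j := ⌊r + 1 / 2⌋₊
  have hstep : G 0 + ∑ i ∈ Finset.range m, c i * heaviside (r - (i + 1 / 2)) = G j := by
    have h := add_sum_range_sub_mul_heaviside (fun i : ℕ => G i) hr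
    push_cast at h
    exact h
  have hGj : |G r - G j| ≤ δ :=
    hG r hr j ⟨Nat.cast_nonneg _, by exact_mod_cast floor_add_half_le hr⟩
      ((abs_sub_floor_add_half_le hr.1).trans (by norm_num))
  have hbase : |G 0 - G 0 * σ (k * (1 / 2))| ≤ |G 0| * (η / (C + 1)) := by
    rw [← mul_one_sub, abs_mul]
    have := hk (1 / 2) (by norm_num)
    rw [heaviside, if_pos (by norm_num)] at this
    exact mul_le_mul_of_nonneg_left this (abs_nonneg _)
  have hjumps := abs_sum_mul_heaviside_sub_sigmoid_le hM hk hδ hc hr.1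
  have hCη : C * (η / (C + 1)) ≤ η := by
    rw [mul_div_assoc', div_le_iff₀ (by linarith)]
    nlinarith
  calc |G r - _|
      = |(G r - G j) + (G 0 - G 0 * σ (k * (1 / 2))) + ∑ i ∈ Finset.range m,
          c i * (heaviside (r - (i + 1 / 2)) - σ (k * (r - (i + 1 / 2))))| := by
        rw [← hstep]
        simp only [Pi.add_apply, Finset.sum_apply, Pi.smul_apply, smul_eq_mul, mul_sub,
          Finset.sum_sub_distrib]
        ring_nf
    _ ≤ δ + |G 0| * (η / (C + 1)) +
          ((∑ i ∈ Finset.range m, |c i|) * (η / (C + 1)) + δ * (1 + M)) :=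
        (abs_add_three _ _ _).trans (add_le_add_three hGj hbase hjumps)
    _ ≤ (M + 2) * δ + η := by nlinarith

theorem exists_mem_sigmoidSpan_near (hM : ∀ u, |σ u| ≤ M)
    (hσ1 : Tendsto σ atTop (𝓝 1)) (hσ0 : Tendsto σ atBot (𝓝 0)) {g : ℝ → ℝ} {a b : ℝ}
    (hab : a < b) (hg : ContinuousOn g (Icc a b)) {ε : ℝ} (hε : 0 < ε) :
    ∃ F ∈ sigmoidSpan σ, ∀ t ∈ Icc a b, |g t - F t| < ε := by
  have hM0 : 0 ≤ M := (abs_nonneg _).trans (hM 0)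
  obtain ⟨d, hd, hgd⟩ := Metric.uniformContinuousOn_iff.1
    (isCompact_Icc.uniformContinuousOn_of_continuous hg) (ε / (2 * (M + 2))) (by positivity)
  obtain ⟨m, hm⟩ := exists_nat_gt ((b - a) / d)
  have hm0 : (0 : ℝ) < m := (div_pos (sub_pos.2 hab) hd).trans hm
  -- rescale `[a, b]` to `[0, m]`, so that the mesh `h` of the grid becomes `1`
  set h := (b - a) / m
  have hh : 0 < h := div_pos (sub_pos.2 hab) hm0
  have hhd : h < d := by rwa [div_lt_iff₀ hm0, mul_comm, ← div_lt_iff₀ hd]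
  have hmem : ∀ r ∈ Icc (0 : ℝ) m, a + h * r ∈ Icc a b := fun r hr =>
    ⟨by nlinarith [hr.1], by nlinarith [hr.2, div_mul_cancel₀ (b - a) hm0.ne']⟩
  obtain ⟨F, hF, hFG⟩ := exists_mem_sigmoidSpan_near_of_oscillation_le hM hσ1 hσ0
    (G := fun r => g (a + h * r)) (m := m) (δ := ε / (2 * (M + 2)))
    (fun r hr r' hr' hrr' => (hgd _ (hmem r hr) _ (hmem r' hr') (by
      rw [Real.dist_eq, add_sub_add_left_eq_sub, ← mul_sub, abs_mul, abs_of_pos hh]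
      nlinarith)).le) (by positivity : 0 < ε / 4)
  refine ⟨fun t => F (h⁻¹ * t + -(h⁻¹ * a)), comp_affine_mem_sigmoidSpan hF _ _, fun t ht => ?_⟩
  have hr : h⁻¹ * (t - a) ∈ Icc (0 : ℝ) m := by
    refine ⟨mul_nonneg (inv_nonneg.2 hh.le) (sub_nonneg.2 ht.1), ?_⟩
    rw [inv_mul_le_iff₀ hh, div_mul_cancel₀ _ hm0.ne']
    linarith [ht.2]
  have hδ : (M + 2) * (ε / (2 * (M + 2))) = ε / 2 := by field_simp
  have := hFG _ hr
  rw [mul_inv_cancel_left₀ hh.ne', add_sub_cancel] at this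
  show |g t - F (h⁻¹ * t + -(h⁻¹ * a))| < ε
  rw [show h⁻¹ * t + -(h⁻¹ * a) = h⁻¹ * (t - a) by ring]
  linarith

end Sigmoid

section Ridge

variable {ι : Type*} [Fintype ι]

def ridge (g : C(ℝ, ℝ)) (s : Set (ι → ℝ)) (w : ι → ℝ) (b : ℝ) : C(s, ℝ) :=
  g.comp ⟨fun x => w ⬝ᵥ (x : ι → ℝ) + b, by fun_prop⟩

@[simp]
theorem ridge_apply (g : C(ℝ, ℝ)) (s : Set (ι → ℝ)) (w : ι → ℝ) (b : ℝ) (x : s) :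
    ridge g s w b x = g (w ⬝ᵥ (x : ι → ℝ) + b) :=
  rfl

def ridgeSpan (σ : C(ℝ, ℝ)) (s : Set (ι → ℝ)) : Submodule ℝ C(s, ℝ) :=
  Submodule.span ℝ (range fun p : (ι → ℝ) × ℝ => ridge σ s p.1 p.2)

theorem exists_mem_ridgeSpan_eq_comp {σ : C(ℝ, ℝ)} {s : Set (ι → ℝ)} {F : ℝ → ℝ}
    (hF : F ∈ sigmoidSpan σ) (w : ι → ℝ) (b : ℝ) :
    ∃ G ∈ ridgeSpan σ s, ∀ x : s, G x = F (w ⬝ᵥ (x : ι → ℝ) + b) := by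
  induction hF using Submodule.span_induction with
  | mem F hF =>
    obtain ⟨p, rfl⟩ := hF
    refine ⟨ridge σ s (p.1 • w) (p.1 * b + p.2), Submodule.subset_span ⟨(_, _), rfl⟩, fun x => ?_⟩
    simp only [ridge_apply, smul_dotProduct, smul_eq_mul]
    ring_nf
  | zero => exact ⟨0, zero_mem _, fun x => rfl⟩
  | add F F' _ _ hF hF' =>
    obtain ⟨G, hG, hGF⟩ := hF
    obtain ⟨G', hG', hGF'⟩ := hF'
    exact ⟨G + G', add_mem hG hG', fun x => by simp [hGF, hGF']⟩
  | smul c F _ hF =>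
    obtain ⟨G, hG, hGF⟩ := hF
    exact ⟨c • G, Submodule.smul_mem _ c hG, fun x => by simp [hGF]⟩

theorem ridge_mem_closure_ridgeSpan {σ : C(ℝ, ℝ)} {M : ℝ} (hM : ∀ u, |σ u| ≤ M)
    (hσ1 : Tendsto σ atTop (𝓝 1)) (hσ0 : Tendsto σ atBot (𝓝 0)) (s : Set (ι → ℝ))
    [CompactSpace s] (g : C(ℝ, ℝ)) (w : ι → ℝ) (b : ℝ) :
    ridge g s w b ∈ closure (ridgeSpan σ s : Set C(s, ℝ)) := by
  rw [Metric.mem_closure_iff]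
  intro ε hε
  set R := ‖ridge (ContinuousMap.id ℝ) s w b‖ + 1
  have hR : 0 < R := by positivity
  obtain ⟨F, hF, hgF⟩ := exists_mem_sigmoidSpan_near hM hσ1 hσ0 (by linarith : -R < R)
    g.continuous.continuousOn hε
  obtain ⟨G, hG, hGF⟩ := exists_mem_ridgeSpan_eq_comp (s := s) hF w b
  refine ⟨G, hG, (ContinuousMap.dist_lt_iff hε).2 fun x => ?_⟩
  have hx : w ⬝ᵥ (x : ι → ℝ) + b ∈ Icc (-R) R := abs_le.1 <|
    ((ridge (ContinuousMap.id ℝ) s w b).norm_coe_le_norm x).trans (by linarith)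
  rw [Real.dist_eq, ridge_apply, hGF]
  exact hgF _ hx

def expRidges (s : Set (ι → ℝ)) : Submonoid C(s, ℝ) where
  carrier := range fun w => ridge ⟨Real.exp, Real.continuous_exp⟩ s w 0
  mul_mem' := by
    rintro _ _ ⟨w, rfl⟩ ⟨w', rfl⟩
    exact ⟨w + w', by ext; simp [add_dotProduct, Real.exp_add]⟩
  one_mem' := ⟨0, by ext; simp⟩

theorem separatesPoints_adjoin_expRidges (s : Set (ι → ℝ)) :
    (Algebra.adjoin ℝ (expRidges s : Set C(s, ℝ))).SeparatesPoints := by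
  classical
  intro x y hxy
  obtain ⟨j, hj⟩ := Function.ne_iff.1 (Subtype.coe_injective.ne hxy)
  refine ⟨_, ⟨ridge ⟨Real.exp, Real.continuous_exp⟩ s (Pi.single j 1) 0,
    Algebra.subset_adjoin ⟨_, rfl⟩, rfl⟩, ?_⟩
  simpa [single_dotProduct] using hj

theorem dense_ridgeSpan (σ : C(ℝ, ℝ)) (hσ1 : Tendsto σ atTop (𝓝 1))
    (hσ0 : Tendsto σ atBot (𝓝 0)) (s : Set (ι → ℝ)) [CompactSpace s] :
    Dense (ridgeSpan σ s : Set C(s, ℝ)) := by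
  obtain ⟨M, hM⟩ := exists_abs_le_of_tendsto_atBot_atTop σ.continuous hσ0 hσ1
  set A := Algebra.adjoin ℝ (expRidges s : Set C(s, ℝ))
  have hA : Subalgebra.toSubmodule A ≤ (ridgeSpan σ s).topologicalClosure := by
    rw [Algebra.adjoin_toSubmodule_le, Submonoid.closure_eq, Submodule.topologicalClosure_coe]
    rintro _ ⟨w, rfl⟩
    exact ridge_mem_closure_ridgeSpan hM hσ1 hσ0 s _ w 0
  have hAdense : Dense (A : Set C(s, ℝ)) := by
    rw [dense_iff_closure_eq, ← Subalgebra.topologicalClosure_coe,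
      ContinuousMap.subalgebra_topologicalClosure_eq_top_of_separatesPoints A
        (separatesPoints_adjoin_expRidges s)]
    rfl
  rw [← dense_closure, ← Submodule.topologicalClosure_coe]
  exact hAdense.mono hA

theorem exists_sum_eq_of_mem_ridgeSpan {σ : C(ℝ, ℝ)} {s : Set (ι → ℝ)} {g : C(s, ℝ)}
    (hg : g ∈ ridgeSpan σ s) :
    ∃ (N : ℕ) (v b : Fin N → ℝ) (w : Fin N → ι → ℝ),
      ∀ x : s, g x = ∑ i, v i * σ (w i ⬝ᵥ (x : ι → ℝ) + b i) := by
  obtain ⟨N, v, e, rfl⟩ := Submodule.mem_span_set'.1 hg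
  choose p hp using fun i => (e i).2
  refine ⟨N, v, fun i => (p i).2, fun i => (p i).1, fun x => ?_⟩
  simp [← hp]

end Ridge

end

/-- Universal approximation theorem (Cybenko 1989): sums of sigmoidal ridge
functions are dense in `C([0,1]^n, ℝ)` for the sup norm. -/
theorem universal_approximation (n : ℕ) (σ : ℝ → ℝ)
    (hσc : Continuous σ)
    (hσ1 : Filter.Tendsto σ Filter.atTop (nhds 1))
    (hσ0 : Filter.Tendsto σ Filter.atBot (nhds 0))
    (f : (Fin n → ℝ) → ℝ) (hf : ContinuousOn f (Set.Icc 0 1))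
    (ε : ℝ) (hε : 0 < ε) :
    ∃ (N : ℕ) (v b : Fin N → ℝ) (w : Fin N → Fin n → ℝ),
      ∀ x ∈ Set.Icc (0 : Fin n → ℝ) 1,
        |f x - ∑ i, v i * σ (∑ j, w i j * x j + b i)| < ε := by
  obtain ⟨g, hg, hfg⟩ := (dense_ridgeSpan ⟨σ, hσc⟩ hσ1 hσ0 (Icc 0 1)).exists_dist_lt
    ⟨(Icc 0 1).domRestrict f, hf.domRestrict⟩ hε
  obtain ⟨N, v, b, w, hg_eq⟩ := exists_sum_eq_of_mem_ridgeSpan hg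
  refine ⟨N, v, b, w, fun x hx => ?_⟩
  have := (ContinuousMap.dist_apply_le_dist ⟨x, hx⟩).trans_lt hfg
  rwa [Real.dist_eq, hg_eq] at this
end
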